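/- (Existence of decaying solution at +∞) Let k > 0 and V, b ∈ L^1(ℝ) ∩ C(ℝ). Then there exists a C² function Y : ℝ → ℝ solving Y'' + b(y)Y' = (k² + V(y))Y on ℝ, with e^{ky}Y(y) → 1 and e^{ky}Y'(y) → −k as y → +∞, and satisfying |Y(y)| ≤ C e^{-ky} for all y ≥ 0, where C depends only on k and ‖V‖_{L^1} + ‖b‖_{L^1}. -/

import Mathlib

/-!
Write `u = e^{ky} (Y, Y')`. The equation becomes the Volterra equation `u = (1, -k) + T u` on
bounded continuous functions, where `‖T u (y)‖ ≤ ∫_y^∞ h ‖u‖` with `h = max (1/k) 1 (|V| + |b|)`.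
Iterating, `‖Tⁿ u (y)‖ ≤ ‖u‖ H(y)ⁿ / n!` for `H(y) = ∫_y^∞ h`, so the Neumann series
`∑ Tⁿ (1, -k)` converges to a solution of norm at most `max 1 k · e^{∫ h}`. Since `T u` is built
from tails of integrable functions, it vanishes at `+∞`, which gives the asymptotics.
-/

open MeasureTheory Real Filter Topology Set
open scoped Nat BoundedContinuousFunction

namespace Jost

section TailIntegral

variable {f : ℝ → ℝ} {a : ℝ}

theorem integrableOn_Ioi_of_continuous (hc : Continuous f) (hi : IntegrableOn f (Ioi a))
    (y : ℝ) : IntegrableOn f (Ioi y) := by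
  rcases le_or_gt a y with h | h
  · exact hi.mono_set (Ioi_subset_Ioi h)
  · rw [← Ioc_union_Ioi_eq_Ioi h.le]
    exact hc.integrableOn_Ioc.union hi

theorem integral_Ioi_eq_sub (hc : Continuous f) (hi : IntegrableOn f (Ioi a)) :
    (fun y => ∫ w in Ioi y, f w) = fun y => (∫ w in Ioi a, f w) - ∫ w in a..y, f w := by
  ext y
  rw [← intervalIntegral.integral_Ioi_sub_Ioi' hi (integrableOn_Ioi_of_continuous hc hi y),
    sub_sub_cancel]

theorem hasDerivAt_integral_Ioi (hc : Continuous f) (hi : IntegrableOn f (Ioi a)) (y : ℝ) :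
    HasDerivAt (fun y => ∫ w in Ioi y, f w) (-f y) y := by
  rw [integral_Ioi_eq_sub hc hi]
  simpa using (hasDerivAt_const y _).fun_sub
    (intervalIntegral.integral_hasDerivAt_right (hc.intervalIntegrable a y)
      (hc.stronglyMeasurableAtFilter _ _) hc.continuousAt)

theorem continuous_integral_Ioi (hc : Continuous f) (hi : IntegrableOn f (Ioi a)) :
    Continuous fun y => ∫ w in Ioi y, f w :=
  continuous_iff_continuousAt.2 fun y => (hasDerivAt_integral_Ioi hc hi y).continuousAt

theorem tendsto_integral_Ioi_atTop (hc : Continuous f) (hi : IntegrableOn f (Ioi a)) :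
    Tendsto (fun y => ∫ w in Ioi y, f w) atTop (𝓝 0) := by
  rw [integral_Ioi_eq_sub hc hi, ← sub_self (∫ w in Ioi a, f w)]
  exact tendsto_const_nhds.sub (intervalIntegral_tendsto_integral_Ioi a hi tendsto_id)

theorem abs_integral_Ioi_le (hi : Integrable f) (y : ℝ) :
    |∫ w in Ioi y, f w| ≤ ∫ w, |f w| :=
  abs_integral_le_integral_abs.trans
    (setIntegral_le_integral hi.abs (ae_of_all _ fun _ => abs_nonneg _))

theorem integrable_mul_integral_Ioi_pow (hc : Continuous f) (hi : Integrable f) (n : ℕ) :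
    Integrable fun w => f w * (∫ v in Ioi w, f v) ^ n :=
  hi.mul_bdd
    ((continuous_integral_Ioi hc (hi.integrableOn (s := Ioi 0))).pow n).aestronglyMeasurable
    (ae_of_all _ fun w => by
      simpa [abs_pow] using pow_le_pow_left₀ (abs_nonneg _) (abs_integral_Ioi_le hi w) n)

theorem integral_Ioi_mul_pow (hc : Continuous f) (hi : Integrable f) (n : ℕ) (y : ℝ) :
    ∫ w in Ioi y, f w * (∫ v in Ioi w, f v) ^ n = (∫ w in Ioi y, f w) ^ (n + 1) / (n + 1) := by
  have hF := hasDerivAt_integral_Ioi hc (hi.integrableOn (s := Ioi 0))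
  have hderiv : ∀ x ∈ Ici y, HasDerivAt (fun y => -((∫ w in Ioi y, f w) ^ (n + 1) / (n + 1)))
      (f x * (∫ v in Ioi x, f v) ^ n) x := fun x _ => by
    refine (((hF x).fun_pow (n + 1)).div_const ((n : ℝ) + 1)).fun_neg.congr_deriv ?_
    rw [Nat.add_sub_cancel]
    push_cast
    field_simp
  have hlim : Tendsto (fun y => -((∫ w in Ioi y, f w) ^ (n + 1) / (n + 1))) atTop (𝓝 0) := by
    simpa using (((tendsto_integral_Ioi_atTop hc (hi.integrableOn (s := Ioi 0))).pow
      (n + 1)).div_const ((n : ℝ) + 1)).neg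
  rw [integral_Ioi_of_hasDerivAt_of_tendsto' hderiv
    (integrable_mul_integral_Ioi_pow hc hi n).integrableOn hlim]
  ring

end TailIntegral

section ExpTail

variable {μ : ℝ} {f g : ℝ → ℝ}

noncomputable def expTail (μ : ℝ) (f : ℝ → ℝ) (y : ℝ) : ℝ := ∫ w in Ioi y, exp (μ * (y - w)) * f w

theorem expTail_eq_exp_mul (μ : ℝ) (f : ℝ → ℝ) :
    expTail μ f = fun y => exp (μ * y) * ∫ w in Ioi y, exp (-(μ * w)) * f w := by
  ext y
  rw [expTail, ← integral_const_mul]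
  congr 1 with w
  rw [← mul_assoc, ← exp_add]
  ring_nf

theorem integrableOn_expTail_integrand (hμ : 0 ≤ μ) (hi : Integrable f) (y : ℝ) :
    IntegrableOn (fun w => exp (μ * (y - w)) * f w) (Ioi y) := by
  refine hi.integrableOn.bdd_mul (c := 1) (by fun_prop) ?_
  refine (ae_restrict_iff' measurableSet_Ioi).2 (ae_of_all _ fun w (hw : y < w) => ?_)
  rw [norm_of_nonneg (exp_pos _).le, exp_le_one_iff]
  nlinarith

theorem hasDerivAt_expTail (hμ : 0 ≤ μ) (hc : Continuous f) (hi : Integrable f) (y : ℝ) :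
    HasDerivAt (expTail μ f) (μ * expTail μ f y - f y) y := by
  have hint : IntegrableOn (fun w => exp (-(μ * w)) * f w) (Ioi 0) := by
    simpa using integrableOn_expTail_integrand hμ hi 0
  have hJ := hasDerivAt_integral_Ioi (by fun_prop) hint y
  have hE : HasDerivAt (fun y => exp (μ * y)) (μ * exp (μ * y)) y := by
    simpa [mul_comm] using ((hasDerivAt_id y).const_mul μ).exp
  rw [expTail_eq_exp_mul]
  refine (hE.mul hJ).congr_deriv ?_
  rw [mul_neg, ← mul_assoc, ← exp_add, add_neg_cancel, exp_zero, one_mul]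
  ring

theorem continuous_expTail (hμ : 0 ≤ μ) (hc : Continuous f) (hi : Integrable f) :
    Continuous (expTail μ f) :=
  continuous_iff_continuousAt.2 fun y => (hasDerivAt_expTail hμ hc hi y).continuousAt

theorem abs_expTail_le (hμ : 0 ≤ μ) (hi : Integrable f) (y : ℝ) :
    |expTail μ f y| ≤ ∫ w in Ioi y, |f w| := by
  refine abs_integral_le_integral_abs.trans (setIntegral_mono_on
    (integrableOn_expTail_integrand hμ hi y).abs hi.abs.integrableOn measurableSet_Ioi
    fun w (hw : y < w) => ?_)
  rw [abs_mul, abs_of_pos (exp_pos _)]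
  exact mul_le_of_le_one_left (abs_nonneg _) (exp_le_one_iff.2 (by nlinarith))

theorem tendsto_expTail_atTop (hμ : 0 ≤ μ) (hc : Continuous f) (hi : Integrable f) :
    Tendsto (expTail μ f) atTop (𝓝 0) :=
  squeeze_zero_norm (abs_expTail_le hμ hi)
    (tendsto_integral_Ioi_atTop hc.abs (hi.abs.integrableOn (s := Ioi 0)))

theorem expTail_add (hμ : 0 ≤ μ) (hf : Integrable f) (hg : Integrable g) (y : ℝ) :
    expTail μ (fun w => f w + g w) y = expTail μ f y + expTail μ g y := by
  simp only [expTail, mul_add]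
  exact integral_add (integrableOn_expTail_integrand hμ hf y)
    (integrableOn_expTail_integrand hμ hg y)

theorem expTail_const_mul (μ c : ℝ) (f : ℝ → ℝ) (y : ℝ) :
    expTail μ (fun w => c * f w) y = c * expTail μ f y := by
  simp only [expTail, ← integral_const_mul]
  congr 1 with w
  ring

end ExpTail

theorem _root_.ContinuousLinearMap.tsum_pow_apply_eq_add {𝕜 X : Type*} [NontriviallyNormedField 𝕜]
    [NormedAddCommGroup X] [NormedSpace 𝕜 X] [CompleteSpace X] (T : X →L[𝕜] X) (x : X)
    (hs : Summable fun n => ‖(T ^ n) x‖) :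
    ∑' n, (T ^ n) x = x + T (∑' n, (T ^ n) x) := by
  nth_rewrite 1 [hs.of_norm.tsum_eq_zero_add]
  rw [T.map_tsum hs.of_norm]
  simp only [pow_zero, pow_succ', mul_apply_eq_comp, one_apply_eq_self]

section Volterra

variable {E : Type*} [NormedAddCommGroup E] [NormedSpace ℝ E] {h : ℝ → ℝ}

theorem norm_pow_apply_apply_le (hc : Continuous h) (hi : Integrable h) (h0 : ∀ w, 0 ≤ h w)
    (T : (ℝ →ᵇ E) →L[ℝ] (ℝ →ᵇ E)) (hT : ∀ u y, ‖T u y‖ ≤ ∫ w in Ioi y, h w * ‖u w‖)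
    (u : ℝ →ᵇ E) (n : ℕ) (y : ℝ) :
    ‖(T ^ n) u y‖ ≤ ‖u‖ * (∫ w in Ioi y, h w) ^ n / n ! := by
  induction n generalizing y with
  | zero => simpa using u.norm_coe_le_norm y
  | succ n ih =>
    rw [pow_succ', mul_apply_eq_comp]
    calc ‖T ((T ^ n) u) y‖ ≤ ∫ w in Ioi y, h w * ‖(T ^ n) u w‖ := hT _ y
      _ ≤ ∫ w in Ioi y, ‖u‖ / n ! * (h w * (∫ v in Ioi w, h v) ^ n) := by
          refine setIntegral_mono_on ?_ ?_ measurableSet_Ioi fun w _ => ?_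
          · exact (hi.mul_bdd (by fun_prop) (ae_of_all _ fun w => by
              simpa using ((T ^ n) u).norm_coe_le_norm w)).integrableOn
          · exact ((integrable_mul_integral_Ioi_pow hc hi n).const_mul _).integrableOn
          · calc h w * ‖(T ^ n) u w‖ ≤ h w * (‖u‖ * (∫ v in Ioi w, h v) ^ n / n !) :=
                  mul_le_mul_of_nonneg_left (ih w) (h0 w)
              _ = ‖u‖ / n ! * (h w * (∫ v in Ioi w, h v) ^ n) := by ring
      _ = ‖u‖ * (∫ w in Ioi y, h w) ^ (n + 1) / (n + 1)! := by
          rw [integral_const_mul, integral_Ioi_mul_pow hc hi n y, Nat.factorial_succ]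
          push_cast
          field_simp

theorem norm_pow_apply_le (hc : Continuous h) (hi : Integrable h) (h0 : ∀ w, 0 ≤ h w)
    (T : (ℝ →ᵇ E) →L[ℝ] (ℝ →ᵇ E)) (hT : ∀ u y, ‖T u y‖ ≤ ∫ w in Ioi y, h w * ‖u w‖)
    (u : ℝ →ᵇ E) (n : ℕ) :
    ‖(T ^ n) u‖ ≤ ‖u‖ * (∫ w, h w) ^ n / n ! := by
  have hA0 : 0 ≤ ∫ w, h w := integral_nonneg h0
  refine (BoundedContinuousFunction.norm_le (by positivity)).2 fun y => ?_
  have hH0 : 0 ≤ ∫ w in Ioi y, h w := setIntegral_nonneg measurableSet_Ioi fun w _ => h0 w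
  have hHA : ∫ w in Ioi y, h w ≤ ∫ w, h w := setIntegral_le_integral hi (ae_of_all _ h0)
  refine (norm_pow_apply_apply_le hc hi h0 T hT u n y).trans ?_
  gcongr

theorem exists_eq_add_apply_of_norm_apply_le [CompleteSpace E] (hc : Continuous h)
    (hi : Integrable h) (h0 : ∀ w, 0 ≤ h w) (T : (ℝ →ᵇ E) →L[ℝ] (ℝ →ᵇ E))
    (hT : ∀ u y, ‖T u y‖ ≤ ∫ w in Ioi y, h w * ‖u w‖) (u₀ : ℝ →ᵇ E) :
    ∃ u : ℝ →ᵇ E, u = u₀ + T u ∧ ‖u‖ ≤ ‖u₀‖ * exp (∫ w, h w) := by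
  have hexp : HasSum (fun n => ‖u₀‖ * ((∫ w, h w) ^ n / n !)) (‖u₀‖ * exp (∫ w, h w)) := by
    have := NormedSpace.expSeries_div_hasSum_exp (∫ w, h w)
    rw [← Real.exp_eq_exp_ℝ] at this
    exact this.mul_left ‖u₀‖
  have hle : ∀ n, ‖(T ^ n) u₀‖ ≤ ‖u₀‖ * ((∫ w, h w) ^ n / n !) := fun n => by
    rw [← mul_div_assoc]
    exact norm_pow_apply_le hc hi h0 T hT u₀ n
  have hs : Summable fun n => ‖(T ^ n) u₀‖ :=
    hexp.summable.of_nonneg_of_le (fun _ => norm_nonneg _) hle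
  refine ⟨∑' n, (T ^ n) u₀, T.tsum_pow_apply_eq_add u₀ hs, ?_⟩
  exact (norm_tsum_le_tsum_norm hs).trans (hexp.tsum_eq ▸ hs.tsum_le_tsum hle hexp.summable)

end Volterra

section JostOperator

variable {k : ℝ} {V b : ℝ → ℝ}

def jostForcing (V b : ℝ → ℝ) (u : ℝ → ℝ × ℝ) (w : ℝ) : ℝ := V w * (u w).1 - b w * (u w).2

/- For `u = e^{ky} (Y, Y')` the kernel of the integral equation is `e^{(M₁ + k)(y - w)}`, and
`M₁ + k = [[k, 1], [k², k]]` has eigenvalues `0` and `2k`: hence the two tails `expTail 0` and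
`expTail (2k)`. -/
noncomputable def jostMap (k : ℝ) (V b : ℝ → ℝ) (u : ℝ → ℝ × ℝ) (y : ℝ) : ℝ × ℝ :=
  ((2 * k)⁻¹ * (expTail 0 (jostForcing V b u) y - expTail (2 * k) (jostForcing V b u) y),
    -2⁻¹ * (expTail 0 (jostForcing V b u) y + expTail (2 * k) (jostForcing V b u) y))

theorem abs_jostForcing_le (u : ℝ → ℝ × ℝ) (w : ℝ) :
    |jostForcing V b u w| ≤ (|V w| + |b w|) * ‖u w‖ := by
  have h₁ : |(u w).1| ≤ ‖u w‖ := norm_fst_le (u w)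
  have h₂ : |(u w).2| ≤ ‖u w‖ := norm_snd_le (u w)
  calc |jostForcing V b u w| ≤ |V w| * |(u w).1| + |b w| * |(u w).2| := by
        rw [jostForcing, ← abs_mul, ← abs_mul]
        exact abs_sub _ _
    _ ≤ (|V w| + |b w|) * ‖u w‖ := by
        rw [add_mul]
        gcongr

theorem continuous_jostForcing (hVc : Continuous V) (hbc : Continuous b) {u : ℝ → ℝ × ℝ}
    (hu : Continuous u) : Continuous (jostForcing V b u) := by
  unfold jostForcing
  fun_prop

theorem integrable_jostForcing (hVc : Continuous V) (hbc : Continuous b) (hVi : Integrable V)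
    (hbi : Integrable b) (u : ℝ →ᵇ ℝ × ℝ) : Integrable (jostForcing V b u) := by
  refine ((hVi.abs.add hbi.abs).mul_const ‖u‖).mono'
    (continuous_jostForcing hVc hbc u.continuous).aestronglyMeasurable (ae_of_all _ fun w => ?_)
  exact (abs_jostForcing_le u w).trans
    (mul_le_mul_of_nonneg_left (u.norm_coe_le_norm w) (by positivity))

theorem norm_jostMap_le (hk : 0 < k) (hVc : Continuous V) (hbc : Continuous b)
    (hVi : Integrable V) (hbi : Integrable b) (u : ℝ →ᵇ ℝ × ℝ) (y : ℝ) :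
    ‖jostMap k V b u y‖ ≤ ∫ w in Ioi y, max k⁻¹ 1 * (|V w| + |b w|) * ‖u w‖ := by
  have hF := integrable_jostForcing hVc hbc hVi hbi u
  have hP := abs_expTail_le le_rfl hF y
  have hQ := abs_expTail_le (by positivity : 0 ≤ 2 * k) hF y
  set I := ∫ w in Ioi y, |jostForcing V b u w|
  have hI : I ≤ ∫ w in Ioi y, (|V w| + |b w|) * ‖u w‖ :=
    setIntegral_mono_on hF.abs.integrableOn
      ((hVi.abs.add hbi.abs).mul_bdd (by fun_prop) (ae_of_all _ fun w => by
        simpa using u.norm_coe_le_norm w)).integrableOn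
      measurableSet_Ioi fun w _ => abs_jostForcing_le u w
  calc ‖jostMap k V b u y‖ ≤ max k⁻¹ 1 * I := by
        rw [Prod.norm_def, Real.norm_eq_abs, Real.norm_eq_abs, jostMap]
        refine max_le ?_ ?_
        · rw [abs_mul, abs_of_pos (by positivity)]
          calc (2 * k)⁻¹ * |expTail 0 (jostForcing V b u) y - expTail (2 * k) (jostForcing V b u) y|
              ≤ (2 * k)⁻¹ * (I + I) := by gcongr; exact (abs_sub _ _).trans (add_le_add hP hQ)
            _ = k⁻¹ * I := by field_simp; ring
            _ ≤ max k⁻¹ 1 * I := by gcongr; exact le_max_left _ _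
        · rw [abs_mul, abs_neg, abs_of_pos (by positivity)]
          calc 2⁻¹ * |expTail 0 (jostForcing V b u) y + expTail (2 * k) (jostForcing V b u) y|
              ≤ 2⁻¹ * (I + I) := by gcongr; exact (abs_add_le _ _).trans (add_le_add hP hQ)
            _ = 1 * I := by ring
            _ ≤ max k⁻¹ 1 * I := by gcongr; exact le_max_right _ _
    _ ≤ max k⁻¹ 1 * ∫ w in Ioi y, (|V w| + |b w|) * ‖u w‖ := by gcongr
    _ = ∫ w in Ioi y, max k⁻¹ 1 * (|V w| + |b w|) * ‖u w‖ := by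
        rw [← integral_const_mul]
        simp only [mul_assoc]


theorem norm_jostMap_le_mul_norm (hk : 0 < k) (hVc : Continuous V) (hbc : Continuous b)
    (hVi : Integrable V) (hbi : Integrable b) (u : ℝ →ᵇ ℝ × ℝ) (y : ℝ) :
    ‖jostMap k V b u y‖ ≤ max k⁻¹ 1 * (∫ w, (|V w| + |b w|)) * ‖u‖ := by
  have hi : Integrable fun w => max k⁻¹ 1 * (|V w| + |b w|) * ‖u‖ :=
    ((hVi.abs.add hbi.abs).const_mul _).mul_const _
  calc ‖jostMap k V b u y‖ ≤ ∫ w in Ioi y, max k⁻¹ 1 * (|V w| + |b w|) * ‖u w‖ :=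
        norm_jostMap_le hk hVc hbc hVi hbi u y
    _ ≤ ∫ w in Ioi y, max k⁻¹ 1 * (|V w| + |b w|) * ‖u‖ := by
        refine setIntegral_mono_on ?_ hi.integrableOn measurableSet_Ioi fun w _ => ?_
        · exact (((hVi.abs.add hbi.abs).const_mul _).mul_bdd (by fun_prop) (ae_of_all _ fun w => by
            simpa using u.norm_coe_le_norm w)).integrableOn
        · exact mul_le_mul_of_nonneg_left (u.norm_coe_le_norm w) (by positivity)
    _ ≤ ∫ w, max k⁻¹ 1 * (|V w| + |b w|) * ‖u‖ :=
        setIntegral_le_integral hi (ae_of_all _ fun w => by positivity)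
    _ = max k⁻¹ 1 * (∫ w, (|V w| + |b w|)) * ‖u‖ := by
        rw [integral_mul_const, integral_const_mul]

theorem continuous_jostMap (hk : 0 < k) (hVc : Continuous V) (hbc : Continuous b)
    (hVi : Integrable V) (hbi : Integrable b) (u : ℝ →ᵇ ℝ × ℝ) :
    Continuous (jostMap k V b u) := by
  have hFc := continuous_jostForcing hVc hbc u.continuous
  have hF := integrable_jostForcing hVc hbc hVi hbi u
  have hP := continuous_expTail le_rfl hFc hF
  have hQ := continuous_expTail (by positivity : 0 ≤ 2 * k) hFc hF
  exact (continuous_const.mul (hP.sub hQ)).prodMk (continuous_const.mul (hP.add hQ))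

theorem jostMap_add (hk : 0 < k) (hVc : Continuous V) (hbc : Continuous b)
    (hVi : Integrable V) (hbi : Integrable b) (u v : ℝ →ᵇ ℝ × ℝ) :
    jostMap k V b ⇑(u + v) = jostMap k V b u + jostMap k V b v := by
  have hF : jostForcing V b ⇑(u + v) = fun w => jostForcing V b u w + jostForcing V b v w := by
    ext w
    simp only [jostForcing, BoundedContinuousFunction.coe_add, Pi.add_apply, Prod.fst_add,
      Prod.snd_add]
    ring
  have hu := integrable_jostForcing hVc hbc hVi hbi u
  have hv := integrable_jostForcing hVc hbc hVi hbi v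
  ext y <;>
  simp only [jostMap, hF, expTail_add le_rfl hu hv, expTail_add (by positivity : 0 ≤ 2 * k) hu hv,
    Pi.add_apply, Prod.fst_add, Prod.snd_add] <;>
  ring

theorem jostMap_smul (c : ℝ) (u : ℝ → ℝ × ℝ) : jostMap k V b (c • u) = c • jostMap k V b u := by
  have hF : jostForcing V b (c • u) = fun w => c * jostForcing V b u w := by
    ext w
    simp only [jostForcing, Pi.smul_apply, Prod.smul_fst, Prod.smul_snd, smul_eq_mul]
    ring
  ext y <;> simp only [jostMap, hF, expTail_const_mul, Pi.smul_apply, Prod.smul_fst,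
    Prod.smul_snd, smul_eq_mul] <;> ring

theorem exists_jostOp (hk : 0 < k) (hVc : Continuous V) (hbc : Continuous b)
    (hVi : Integrable V) (hbi : Integrable b) :
    ∃ T : (ℝ →ᵇ ℝ × ℝ) →L[ℝ] (ℝ →ᵇ ℝ × ℝ), ∀ u, ⇑(T u) = jostMap k V b u := by
  set c := max k⁻¹ 1 * ∫ w, (|V w| + |b w|)
  have hc : 0 ≤ c := mul_nonneg (le_max_of_le_right zero_le_one)
    (integral_nonneg fun w => by positivity)
  have hbound := norm_jostMap_le_mul_norm hk hVc hbc hVi hbi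
  let L : (ℝ →ᵇ ℝ × ℝ) →ₗ[ℝ] (ℝ →ᵇ ℝ × ℝ) :=
    { toFun := fun u => .ofNormedAddCommGroup (jostMap k V b u)
        (continuous_jostMap hk hVc hbc hVi hbi u) (c * ‖u‖) (hbound u)
      map_add' := fun u v => by
        ext1 y
        exact congrFun (jostMap_add hk hVc hbc hVi hbi u v) y
      map_smul' := fun c u => by
        ext1 y
        exact congrFun (jostMap_smul c u) y }
  exact ⟨L.mkContinuous c fun u =>
    (BoundedContinuousFunction.norm_le (by positivity)).2 (hbound u), fun u => rfl⟩

theorem tendsto_jostMap_atTop (hk : 0 < k) (hVc : Continuous V) (hbc : Continuous b)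
    (hVi : Integrable V) (hbi : Integrable b) (u : ℝ →ᵇ ℝ × ℝ) :
    Tendsto (jostMap k V b u) atTop (𝓝 0) := by
  have hFc := continuous_jostForcing hVc hbc u.continuous
  have hF := integrable_jostForcing hVc hbc hVi hbi u
  have hP := tendsto_expTail_atTop le_rfl hFc hF
  have hQ := tendsto_expTail_atTop (by positivity : 0 ≤ 2 * k) hFc hF
  have := ((hP.sub hQ).const_mul (2 * k)⁻¹).prodMk_nhds ((hP.add hQ).const_mul (-2⁻¹))
  simp only [sub_zero, add_zero, mul_zero, Prod.mk_zero_zero] at this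
  exact this

theorem exists_jost_fixedPoint (hk : 0 < k) (hVc : Continuous V) (hbc : Continuous b)
    (hVi : Integrable V) (hbi : Integrable b) :
    ∃ u : ℝ →ᵇ ℝ × ℝ, (∀ y, u y = (1, -k) + jostMap k V b u y) ∧
      ‖u‖ ≤ max 1 k * exp (max k⁻¹ 1 * ((∫ w, |V w|) + ∫ w, |b w|)) := by
  obtain ⟨T, hT⟩ := exists_jostOp hk hVc hbc hVi hbi
  obtain ⟨u, hu, hnorm⟩ :=
    exists_eq_add_apply_of_norm_apply_le (h := fun w => max k⁻¹ 1 * (|V w| + |b w|))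
      (by fun_prop) ((hVi.abs.add hbi.abs).const_mul _) (fun w => by positivity) T
      (fun u y => by simpa only [hT] using norm_jostMap_le hk hVc hbc hVi hbi u y)
      (BoundedContinuousFunction.const ℝ ((1 : ℝ), -k))
  refine ⟨u, fun y => by rw [← hT]; exact congrArg (· y) hu, hnorm.trans ?_⟩
  rw [integral_const_mul, integral_add hVi.abs hbi.abs]
  gcongr
  refine (BoundedContinuousFunction.norm_const_le _).trans ?_
  simp [Prod.norm_def, abs_of_pos hk]

end JostOperator

section JostSolution

variable {k : ℝ} {V b : ℝ → ℝ}

theorem hasDerivAt_of_jost_fixedPoint (hk : 0 < k) (hVc : Continuous V) (hbc : Continuous b)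
    (hVi : Integrable V) (hbi : Integrable b) {u : ℝ →ᵇ ℝ × ℝ}
    (hu : ∀ y, u y = (1, -k) + jostMap k V b u y) (y : ℝ) :
    HasDerivAt (fun y => (u y).1) (k * (u y).1 + (u y).2) y ∧
      HasDerivAt (fun y => (u y).2)
        (k * (u y).2 + ((k ^ 2 + V y) * (u y).1 - b y * (u y).2)) y := by
  set F := jostForcing V b u
  have hFc : Continuous F := continuous_jostForcing hVc hbc u.continuous
  have hF : Integrable F := integrable_jostForcing hVc hbc hVi hbi u
  set P := expTail 0 F
  set Q := expTail (2 * k) F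
  have hP : HasDerivAt P (0 * P y - F y) y := hasDerivAt_expTail le_rfl hFc hF y
  have hQ : HasDerivAt Q (2 * k * Q y - F y) y :=
    hasDerivAt_expTail (by positivity) hFc hF y
  have hu₁ : (fun y => (u y).1) = fun y => 1 + (2 * k)⁻¹ * (P y - Q y) := by
    ext y
    rw [hu y]
    rfl
  have hu₂ : (fun y => (u y).2) = fun y => -k + -2⁻¹ * (P y + Q y) := by
    ext y
    rw [hu y]
    rfl
  have hFy : F y = V y * (u y).1 - b y * (u y).2 := rfl
  have hk0 : k ≠ 0 := hk.ne'
  constructor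
  · rw [hu₁]
    refine (((hP.sub hQ).const_mul _).const_add 1).congr_deriv ?_
    rw [congrFun hu₁ y, congrFun hu₂ y]
    field_simp
    ring
  · rw [hu₂]
    refine (((hP.add hQ).const_mul _).const_add (-k)).congr_deriv ?_
    rw [show (k ^ 2 + V y) * (u y).1 - b y * (u y).2 = k ^ 2 * (u y).1 + F y by rw [hFy]; ring,
      congrFun hu₁ y, congrFun hu₂ y]
    field_simp
    ring

theorem hasDerivAt_exp_neg_mul {f g : ℝ → ℝ} {y : ℝ} (hf : HasDerivAt f (k * f y + g y) y) :
    HasDerivAt (fun y => exp (-k * y) * f y) (exp (-k * y) * g y) y := by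
  have hE : HasDerivAt (fun y => exp (-k * y)) (-k * exp (-k * y)) y := by
    simpa [mul_comm] using ((hasDerivAt_id y).const_mul (-k)).exp
  refine (hE.mul hf).congr_deriv ?_
  ring

theorem hasDerivAt_jostSolution (hk : 0 < k) (hVc : Continuous V) (hbc : Continuous b)
    (hVi : Integrable V) (hbi : Integrable b) {u : ℝ →ᵇ ℝ × ℝ}
    (hu : ∀ y, u y = (1, -k) + jostMap k V b u y) (y : ℝ) :
    HasDerivAt (fun y => exp (-k * y) * (u y).1) (exp (-k * y) * (u y).2) y ∧
      HasDerivAt (fun y => exp (-k * y) * (u y).2)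
        ((k ^ 2 + V y) * (exp (-k * y) * (u y).1) + -b y * (exp (-k * y) * (u y).2)) y := by
  obtain ⟨h₁, h₂⟩ := hasDerivAt_of_jost_fixedPoint hk hVc hbc hVi hbi hu y
  exact ⟨hasDerivAt_exp_neg_mul (f := fun y => (u y).1) (g := fun y => (u y).2) h₁,
    (hasDerivAt_exp_neg_mul (f := fun y => (u y).2)
      (g := fun y => (k ^ 2 + V y) * (u y).1 - b y * (u y).2) h₂).congr_deriv (by ring)⟩

theorem tendsto_of_jost_fixedPoint (hk : 0 < k) (hVc : Continuous V) (hbc : Continuous b)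
    (hVi : Integrable V) (hbi : Integrable b) {u : ℝ →ᵇ ℝ × ℝ}
    (hu : ∀ y, u y = (1, -k) + jostMap k V b u y) :
    Tendsto (fun y => u y) atTop (𝓝 (1, -k)) := by
  simpa [← hu] using (tendsto_jostMap_atTop hk hVc hbc hVi hbi u).const_add ((1 : ℝ), -k)

theorem contDiff_two_of_hasDerivAt {Y Y' c d : ℝ → ℝ} (hc : Continuous c) (hd : Continuous d)
    (hY : ∀ y, HasDerivAt Y (Y' y) y) (hY' : ∀ y, HasDerivAt Y' (c y * Y y + d y * Y' y) y) :
    ContDiff ℝ 2 Y := by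
  have hYc : Continuous Y := continuous_iff_continuousAt.2 fun y => (hY y).continuousAt
  have hY'c : Continuous Y' := continuous_iff_continuousAt.2 fun y => (hY' y).continuousAt
  rw [show (2 : WithTop ℕ∞) = 1 + 1 from rfl, contDiff_succ_iff_deriv]
  refine ⟨fun y => (hY y).differentiableAt, by simp, ?_⟩
  rw [show deriv Y = Y' from funext fun y => (hY y).deriv, contDiff_one_iff_deriv]
  refine ⟨fun y => (hY' y).differentiableAt, ?_⟩
  rw [show deriv Y' = _ from funext fun y => (hY' y).deriv]
  fun_prop

end JostSolution
end Jost

open Jost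

/-- Jost solution at `+∞`: for `k > 0` and continuous integrable
`V, b`, there is a C² solution of `Y'' + b Y' = (k² + V) Y` with
`e^{ky} Y → 1`, `e^{ky} Y' → −k` at `+∞`, and `|Y(y)| ≤ C e^{-ky}` on `[0,∞)`
for `C` depending only on `k` and `‖V‖_{L¹} + ‖b‖_{L¹}`. -/
theorem stmt12 (k A : ℝ) (hk : 0 < k) :
    ∃ C > 0, ∀ V b : ℝ → ℝ, Continuous V → Continuous b →
      Integrable V → Integrable b →
      (∫ y : ℝ, |V y|) + (∫ y : ℝ, |b y|) ≤ A →
      ∃ Y : ℝ → ℝ, ContDiff ℝ 2 Y ∧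
        (∀ y, deriv (deriv Y) y + b y * deriv Y y = (k ^ 2 + V y) * Y y) ∧
        Tendsto (fun y => exp (k * y) * Y y) atTop (nhds 1) ∧
        Tendsto (fun y => exp (k * y) * deriv Y y) atTop (nhds (-k)) ∧
        ∀ y : ℝ, 0 ≤ y → |Y y| ≤ C * exp (-k * y) := by
  refine ⟨max 1 k * exp (max k⁻¹ 1 * A), by positivity, fun V b hVc hbc hVi hbi hA => ?_⟩
  obtain ⟨u, hfix, hnorm⟩ := exists_jost_fixedPoint hk hVc hbc hVi hbi
  have hY := fun y => (hasDerivAt_jostSolution hk hVc hbc hVi hbi hfix y).1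
  have hY' := fun y => (hasDerivAt_jostSolution hk hVc hbc hVi hbi hfix y).2
  have hlim := tendsto_of_jost_fixedPoint hk hVc hbc hVi hbi hfix
  set Y : ℝ → ℝ := fun y => exp (-k * y) * (u y).1
  set Y' : ℝ → ℝ := fun y => exp (-k * y) * (u y).2
  have hdY : deriv Y = Y' := funext fun y => (hY y).deriv
  have hexp (y z : ℝ) : exp (k * y) * (exp (-k * y) * z) = z := by
    rw [← mul_assoc, ← exp_add, neg_mul, add_neg_cancel, exp_zero, one_mul]
  refine ⟨Y, contDiff_two_of_hasDerivAt (by fun_prop) (by fun_prop) hY hY', fun y => ?_,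
    ?_, ?_, fun y _ => ?_⟩
  · rw [hdY, (hY' y).deriv]
    ring
  · simpa only [Y, hexp] using hlim.fst_nhds
  · simpa only [hdY, Y', hexp] using hlim.snd_nhds
  · calc |Y y| = exp (-k * y) * |(u y).1| := by rw [abs_mul, abs_of_pos (exp_pos _)]
      _ ≤ exp (-k * y) * (max 1 k * exp (max k⁻¹ 1 * A)) := by
          gcongr
          exact (norm_fst_le (u y)).trans ((u.norm_coe_le_norm y).trans (hnorm.trans (by gcongr)))
      _ = _ := mul_comm _ _
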